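/- arXiv:1510.07996 — 3 statements merged into one kernel-verified Lean document; each statement's English description precedes it below -/
import Mathlib

section
/- With g(h) defined as the unique solution of ∑_{t≥2}(t-1)K₀(t)exp(h - t·g(h)) = 1 for h ≥ 0, extended by g(h) = 0 for h < 0, the function g : ℝ → [0,∞) is convex. -/
/-- The free energy `g`, defined implicitly for `h ≥ 0` by
`∑_{t ≥ 2} (t-1) K₀(t) exp(h - t g(h)) = 1` and extended by `g(h) = 0` for `h < 0`,
is a convex function on `ℝ`. Here `t ≥ 2` is encoded as `t+2`, `t : ℕ`, so the
weight `(t-1)` is `(t+1)`. -/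
theorem gPS_free_energy_g_convex
    (K₀ : ℕ → ℝ) (hpos : ∀ t, 2 ≤ t → 0 < K₀ t)
    (hsum : Summable (fun t : ℕ => ((t : ℝ) + 1) * K₀ (t + 2)))
    (hnorm : ∑' t : ℕ, ((t : ℝ) + 1) * K₀ (t + 2) = 1)
    (g : ℝ → ℝ)
    (hgneg : ∀ h : ℝ, h < 0 → g h = 0)
    (hg : ∀ h : ℝ, 0 ≤ h →
      0 ≤ g h ∧
      ∑' t : ℕ, ((t : ℝ) + 1) * K₀ (t + 2) * Real.exp (h - ((t : ℝ) + 2) * g h) = 1) :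
    ConvexOn ℝ Set.univ g := by
  have hgnn : ∀ h : ℝ, 0 ≤ g h := by
    intro h
    rcases lt_or_ge h 0 with h0 | h0
    · rw [hgneg h h0]
    · exact (hg h h0).1
  have hK : ∀ t : ℕ, 0 < ((t : ℝ) + 1) * K₀ (t + 2) := by
    intro t
    exact mul_pos (by positivity) (hpos (t + 2) (by omega))
  -- summability of the series for any h and y ≥ 0
  have hsumm : ∀ h y : ℝ, 0 ≤ y →
      Summable (fun t : ℕ => ((t : ℝ) + 1) * K₀ (t + 2) * Real.exp (h - ((t : ℝ) + 2) * y)) := by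
    intro h y hy
    refine Summable.of_nonneg_of_le (fun t => ?_) (fun t => ?_) (hsum.mul_right (Real.exp h))
    · exact le_of_lt (mul_pos (hK t) (Real.exp_pos _))
    · refine mul_le_mul_of_nonneg_left ?_ (hK t).le
      refine Real.exp_le_exp.mpr ?_
      have h2 : (0:ℝ) ≤ ((t : ℝ) + 2) * y := by positivity
      linarith
  -- F(h, g h) ≤ 1 for all h
  have hle1 : ∀ h : ℝ,
      ∑' t : ℕ, ((t : ℝ) + 1) * K₀ (t + 2) * Real.exp (h - ((t : ℝ) + 2) * g h) ≤ 1 := by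
    intro h
    rcases le_or_gt 0 h with h0 | h0
    · exact le_of_eq (hg h h0).2
    · rw [hgneg h h0]
      have : ∀ t : ℕ, ((t : ℝ) + 1) * K₀ (t + 2) * Real.exp (h - ((t : ℝ) + 2) * 0)
          = ((t : ℝ) + 1) * K₀ (t + 2) * Real.exp h := by
        intro t; rw [mul_zero, sub_zero]
      rw [tsum_congr this, tsum_mul_right, hnorm, one_mul]
      exact Real.exp_le_one_iff.mpr h0.le
  refine ⟨convex_univ, ?_⟩
  intro x _ y _ a b ha hb hab
  simp only [smul_eq_mul]
  set c := a * x + b * y with hc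
  set w := a * g x + b * g y with hw
  have hwnn : 0 ≤ w := add_nonneg (mul_nonneg ha (hgnn x)) (mul_nonneg hb (hgnn y))
  -- convexity of the partition function along the segment
  have hFcw : ∑' t : ℕ, ((t : ℝ) + 1) * K₀ (t + 2) * Real.exp (c - ((t : ℝ) + 2) * w) ≤ 1 := by
    have hpt : ∀ t : ℕ,
        ((t : ℝ) + 1) * K₀ (t + 2) * Real.exp (c - ((t : ℝ) + 2) * w)
        ≤ a * (((t : ℝ) + 1) * K₀ (t + 2) * Real.exp (x - ((t : ℝ) + 2) * g x))
          + b * (((t : ℝ) + 1) * K₀ (t + 2) * Real.exp (y - ((t : ℝ) + 2) * g y)) := by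
      intro t
      have hcvx := convexOn_exp.2 (Set.mem_univ (x - ((t : ℝ) + 2) * g x))
        (Set.mem_univ (y - ((t : ℝ) + 2) * g y)) ha hb hab
      simp only [smul_eq_mul] at hcvx
      have harg : c - ((t : ℝ) + 2) * w
          = a * (x - ((t : ℝ) + 2) * g x) + b * (y - ((t : ℝ) + 2) * g y) := by
        rw [hc, hw]; ring
      rw [harg]
      calc ((t : ℝ) + 1) * K₀ (t + 2)
            * Real.exp (a * (x - ((t : ℝ) + 2) * g x) + b * (y - ((t : ℝ) + 2) * g y))
          ≤ ((t : ℝ) + 1) * K₀ (t + 2)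
            * (a * Real.exp (x - ((t : ℝ) + 2) * g x) + b * Real.exp (y - ((t : ℝ) + 2) * g y)) :=
            mul_le_mul_of_nonneg_left hcvx (hK t).le
        _ = a * (((t : ℝ) + 1) * K₀ (t + 2) * Real.exp (x - ((t : ℝ) + 2) * g x))
            + b * (((t : ℝ) + 1) * K₀ (t + 2) * Real.exp (y - ((t : ℝ) + 2) * g y)) := by ring
    have hsx := hsumm x (g x) (hgnn x)
    have hsy := hsumm y (g y) (hgnn y)
    calc ∑' t : ℕ, ((t : ℝ) + 1) * K₀ (t + 2) * Real.exp (c - ((t : ℝ) + 2) * w)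
        ≤ ∑' t : ℕ, (a * (((t : ℝ) + 1) * K₀ (t + 2) * Real.exp (x - ((t : ℝ) + 2) * g x))
            + b * (((t : ℝ) + 1) * K₀ (t + 2) * Real.exp (y - ((t : ℝ) + 2) * g y))) :=
          Summable.tsum_le_tsum hpt (hsumm c w hwnn) ((hsx.mul_left a).add (hsy.mul_left b))
      _ = a * (∑' t : ℕ, ((t : ℝ) + 1) * K₀ (t + 2) * Real.exp (x - ((t : ℝ) + 2) * g x))
            + b * (∑' t : ℕ, ((t : ℝ) + 1) * K₀ (t + 2) * Real.exp (y - ((t : ℝ) + 2) * g y)) := by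
          rw [Summable.tsum_add (hsx.mul_left a) (hsy.mul_left b), tsum_mul_left, tsum_mul_left]
      _ ≤ a * 1 + b * 1 :=
          add_le_add (mul_le_mul_of_nonneg_left (hle1 x) ha)
            (mul_le_mul_of_nonneg_left (hle1 y) hb)
      _ = 1 := by linarith
  -- conclude g c ≤ w
  by_contra hlt
  push_neg at hlt
  have hcnn : 0 ≤ c := by
    by_contra hcneg
    push_neg at hcneg
    rw [hgneg c hcneg] at hlt
    exact absurd hwnn (not_le.mpr hlt)
  have heq : ∑' t : ℕ, ((t : ℝ) + 1) * K₀ (t + 2) * Real.exp (c - ((t : ℝ) + 2) * g c) = 1 :=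
    (hg c hcnn).2
  have hstrict : ∀ t : ℕ,
      ((t : ℝ) + 1) * K₀ (t + 2) * Real.exp (c - ((t : ℝ) + 2) * g c)
      < ((t : ℝ) + 1) * K₀ (t + 2) * Real.exp (c - ((t : ℝ) + 2) * w) := by
    intro t
    refine mul_lt_mul_of_pos_left (Real.exp_lt_exp.mpr ?_) (hK t)
    have h2 : (0:ℝ) < (t : ℝ) + 2 := by positivity
    have := mul_lt_mul_of_pos_left hlt h2
    linarith
  have hgc : 0 ≤ g c := hgnn c
  have hsgc := hsumm c (g c) hgc
  have hsw := hsumm c w hwnn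
  have hlt2 := Summable.tsum_lt_tsum (fun t => (hstrict t).le) (hstrict 0) hsgc hsw
  rw [heq] at hlt2
  linarith
end

section
/- Suppose K₀ : {2,3,...} → (0,∞) satisfies ∑_{t≥2}(t-1)K₀(t) = 1 and ∑_{t≥2} t²K₀(t) < ∞. Let g(h) be the unique solution of ∑_{t≥2}(t-1)K₀(t)exp(h - t·g(h)) = 1 for h ≥ 0. Then as h ↓ 0, g(h) ~ h / ∑_{t≥2} t(t-1)K₀(t), i.e. lim_{h↓0} g(h)·(∑_{t≥2} t(t-1)K₀(t))/h = 1. -/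
/-!
Put `wₜ = (t - 1) K₀(t)`, `cₜ = t` and `Φ(a) = expDeficit w c a = ∑ₜ wₜ (1 - e^{-cₜ a})`. The
normalisation `∑ wₜ = 1` turns the defining equation of `g` into `Φ(g h) = 1 - e^{-h}`. Since
`0 ≤ 1 - e^{-x} ≤ x`, dominated convergence with the summable bound `wₜ cₜ` gives
`Φ(a) / a → S = ∑ wₜ cₜ` as `a ↓ 0`. Monotonicity of `Φ` forces `g h ↓ 0`, hence
`(1 - e^{-h}) / g h → S`, and `(1 - e^{-h}) / h → 1` finishes the proof.
-/

open Filter Topology Real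

lemma tendsto_one_sub_exp_neg_mul_div (c : ℝ) :
    Tendsto (fun a => (1 - exp (-(c * a))) / a) (𝓝[≠] 0) (𝓝 c) := by
  have hderiv : HasDerivAt (fun a => 1 - exp (-(c * a))) c 0 := by
    simpa using (((hasDerivAt_id (0 : ℝ)).const_mul c).neg.exp).const_sub 1
  refine (hasDerivAt_iff_tendsto_slope.mp hderiv).congr fun a => ?_
  simp [slope_def_field]

lemma one_sub_exp_neg_nonneg {x : ℝ} (hx : 0 ≤ x) : 0 ≤ 1 - exp (-x) := by
  simpa using exp_le_one_iff.mpr (neg_nonpos.mpr hx)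

lemma one_sub_exp_neg_pos {x : ℝ} (hx : 0 < x) : 0 < 1 - exp (-x) :=
  sub_pos.2 (exp_lt_one_iff.mpr (neg_neg_of_pos hx))

lemma one_sub_exp_neg_le (x : ℝ) : 1 - exp (-x) ≤ x := by
  linarith [one_sub_le_exp_neg x]

noncomputable def expDeficit (w c : ℕ → ℝ) (a : ℝ) : ℝ :=
  ∑' t, w t * (1 - exp (-(c t * a)))

namespace expDeficit

variable {w c : ℕ → ℝ}

lemma apply_zero : expDeficit w c 0 = 0 := by simp [expDeficit]

lemma term_nonneg (hw : ∀ t, 0 ≤ w t) (hc : ∀ t, 0 ≤ c t) {a : ℝ} (ha : 0 ≤ a) (t : ℕ) :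
    0 ≤ w t * (1 - exp (-(c t * a))) :=
  mul_nonneg (hw t) (one_sub_exp_neg_nonneg (mul_nonneg (hc t) ha))

lemma term_le (hw : ∀ t, 0 ≤ w t) (a : ℝ) (t : ℕ) :
    w t * (1 - exp (-(c t * a))) ≤ a * (w t * c t) := by
  calc w t * (1 - exp (-(c t * a))) ≤ w t * (c t * a) :=
        mul_le_mul_of_nonneg_left (one_sub_exp_neg_le _) (hw t)
    _ = a * (w t * c t) := by ring

lemma summable_terms (hw : ∀ t, 0 ≤ w t) (hc : ∀ t, 0 ≤ c t)
    (hwc : Summable fun t => w t * c t) {a : ℝ} (ha : 0 ≤ a) :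
    Summable fun t => w t * (1 - exp (-(c t * a))) :=
  (hwc.mul_left a).of_nonneg_of_le (term_nonneg hw hc ha) (term_le hw a)

lemma monotoneOn (hw : ∀ t, 0 ≤ w t) (hc : ∀ t, 0 ≤ c t)
    (hwc : Summable fun t => w t * c t) : MonotoneOn (expDeficit w c) (Set.Ici 0) := by
  intro a ha b hb hab
  refine (summable_terms hw hc hwc ha).tsum_le_tsum (fun t => ?_) (summable_terms hw hc hwc hb)
  gcongr
  · exact hw t
  · exact hc t

lemma pos (hw : ∀ t, 0 ≤ w t) (hc : ∀ t, 0 ≤ c t) (hwc : Summable fun t => w t * c t)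
    {i : ℕ} (hwi : 0 < w i) (hci : 0 < c i) {a : ℝ} (ha : 0 < a) : 0 < expDeficit w c a := by
  refine (summable_terms hw hc hwc ha.le).tsum_pos (term_nonneg hw hc ha.le) i
    (mul_pos hwi ?_)
  simpa using exp_lt_one_iff.mpr (neg_neg_of_pos (mul_pos hci ha))

lemma eq_one_sub_exp_neg (hw : ∀ t, 0 ≤ w t) (hc : ∀ t, 0 ≤ c t) (hnorm : ∑' t, w t = 1)
    {a h : ℝ} (ha : 0 ≤ a) (hsum : ∑' t, w t * exp (h - c t * a) = 1) :
    expDeficit w c a = 1 - exp (-h) := by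
  have hw_sum : Summable w := by
    by_contra hns
    simp [tsum_eq_zero_of_not_summable hns] at hnorm
  have hdamped : Summable fun t => w t * exp (-(c t * a)) := by
    refine hw_sum.of_nonneg_of_le (fun t => mul_nonneg (hw t) (exp_nonneg _)) fun t => ?_
    exact mul_le_of_le_one_right (hw t)
      (exp_le_one_iff.mpr (neg_nonpos.mpr (mul_nonneg (hc t) ha)))
  have hdamped_sum : ∑' t, w t * exp (-(c t * a)) = exp (-h) := by
    rw [exp_neg]
    refine eq_inv_of_mul_eq_one_left ?_
    rw [← tsum_mul_right, ← hsum]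
    congr 1 with t
    rw [sub_eq_add_neg, exp_add]
    ring
  simp only [expDeficit, mul_sub, mul_one]
  rw [hw_sum.tsum_sub hdamped, hnorm, hdamped_sum]

lemma tendsto_div (hw : ∀ t, 0 ≤ w t) (hc : ∀ t, 0 ≤ c t) (hwc : Summable fun t => w t * c t) :
    Tendsto (fun a => expDeficit w c a / a) (𝓝[>] 0) (𝓝 (∑' t, w t * c t)) := by
  simp only [expDeficit, ← tsum_div_const, mul_div_assoc]
  refine tendsto_tsum_of_dominated_convergence hwc (fun t => ?_) ?_
  · exact ((tendsto_one_sub_exp_neg_mul_div (c t)).mono_left (nhdsGT_le_nhdsNE 0)).const_mul (w t)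
  · filter_upwards [self_mem_nhdsWithin] with a (ha : 0 < a) t
    rw [← mul_div_assoc, norm_of_nonneg (div_nonneg (term_nonneg hw hc ha.le t) ha.le),
      div_le_iff₀ ha]
    linarith [term_le (c := c) hw a t]

lemma tendsto_zero_of_comp_tendsto_zero {α : Type*} {l : Filter α} {f : α → ℝ}
    (hw : ∀ t, 0 ≤ w t) (hc : ∀ t, 0 ≤ c t) (hwc : Summable fun t => w t * c t)
    {i : ℕ} (hwi : 0 < w i) (hci : 0 < c i) (hf : ∀ᶠ x in l, 0 ≤ f x)
    (hlim : Tendsto (fun x => expDeficit w c (f x)) l (𝓝 0)) : Tendsto f l (𝓝 0) := by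
  refine tendsto_order.2 ⟨fun ε hε => hf.mono fun x hx => hε.trans_le hx, fun ε hε => ?_⟩
  filter_upwards [(tendsto_order.1 hlim).2 _ (pos hw hc hwc hwi hci hε), hf] with x hx hfx
  by_contra! hεx
  exact hx.not_ge (monotoneOn hw hc hwc (Set.mem_Ici.2 hε.le) (Set.mem_Ici.2 hfx) hεx)

lemma tendsto_solution_mul_div (hw : ∀ t, 0 ≤ w t) (hc : ∀ t, 0 ≤ c t)
    (hwc : Summable fun t => w t * c t) {i : ℕ} (hwi : 0 < w i) (hci : 0 < c i) {g : ℝ → ℝ}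
    (hg_nonneg : ∀ h, 0 < h → 0 ≤ g h) (hg : ∀ h, 0 < h → expDeficit w c (g h) = 1 - exp (-h)) :
    Tendsto (fun h => g h * (∑' t, w t * c t) / h) (𝓝[>] 0) (𝓝 1) := by
  have hS_pos : 0 < ∑' t, w t * c t :=
    hwc.tsum_pos (fun t => mul_nonneg (hw t) (hc t)) i (mul_pos hwi hci)
  have hg_pos : ∀ h, 0 < h → 0 < g h := fun h hh =>
    (hg_nonneg h hh).lt_of_ne fun h0 => by
      simpa [← h0, apply_zero, (one_sub_exp_neg_pos hh).ne] using hg h hh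
  have hg_lim : Tendsto g (𝓝[>] 0) (𝓝[>] 0) := by
    refine tendsto_nhdsWithin_iff.2 ⟨?_, eventually_nhdsWithin_of_forall hg_pos⟩
    refine tendsto_zero_of_comp_tendsto_zero hw hc hwc hwi hci
      (eventually_nhdsWithin_of_forall hg_nonneg) ?_
    have h_exp : Tendsto (fun h => 1 - exp (-h)) (𝓝[>] 0) (𝓝 0) :=
      (Continuous.tendsto' (by fun_prop) 0 0 (by simp)).mono_left nhdsWithin_le_nhds
    exact h_exp.congr' (eventually_nhdsWithin_of_forall fun h hh => (hg h hh).symm)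
  have hslope : Tendsto (fun h => (1 - exp (-h)) / h) (𝓝[>] 0) (𝓝 1) := by
    simpa using (tendsto_one_sub_exp_neg_mul_div 1).mono_left (nhdsGT_le_nhdsNE 0)
  -- `g h * S / h = S * (expDeficit (g h) / g h)⁻¹ * ((1 - e^{-h}) / h)`
  have hlim := ((((tendsto_div hw hc hwc).comp hg_lim).inv₀ hS_pos.ne').mul hslope).const_mul
    (∑' t, w t * c t)
  rw [mul_one, mul_inv_cancel₀ hS_pos.ne'] at hlim
  refine hlim.congr' (eventually_nhdsWithin_of_forall fun h hh => ?_)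
  simp only [Function.comp_apply, hg h hh]
  field_simp [(hg_pos h hh).ne', (one_sub_exp_neg_pos hh).ne']

end expDeficit

/-- If `∑_{t ≥ 2} t² K₀(t) < ∞` (and `∑_{t ≥ 2} (t-1) K₀(t) = 1`), then
the implicitly defined free energy `g(h)` satisfies
`g(h) ~ h / ∑_{t ≥ 2} t(t-1) K₀(t)` as `h ↓ 0`, i.e.
`g(h) (∑_{t ≥ 2} t(t-1) K₀(t)) / h → 1`. -/
theorem gPS_free_energy_g_linear_asymptotics
    (K₀ : ℕ → ℝ) (hpos : ∀ t, 2 ≤ t → 0 < K₀ t)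
    (hnorm : ∑' t : ℕ, ((t : ℝ) + 1) * K₀ (t + 2) = 1)
    (hsq : Summable (fun t : ℕ => ((t : ℝ) + 2) ^ 2 * K₀ (t + 2)))
    (g : ℝ → ℝ)
    (hg : ∀ h : ℝ, 0 ≤ h →
      0 ≤ g h ∧
      ∑' t : ℕ, ((t : ℝ) + 1) * K₀ (t + 2) * Real.exp (h - ((t : ℝ) + 2) * g h) = 1) :
    Tendsto (fun h : ℝ => g h * (∑' t : ℕ, ((t : ℝ) + 2) * ((t : ℝ) + 1) * K₀ (t + 2)) / h)
      (nhdsWithin 0 (Set.Ioi 0)) (nhds 1) := by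
  let w : ℕ → ℝ := fun t => ((t : ℝ) + 1) * K₀ (t + 2)
  let c : ℕ → ℝ := fun t => (t : ℝ) + 2
  have hK : ∀ t : ℕ, 0 < K₀ (t + 2) := fun t => hpos _ (by omega)
  have hw_pos : ∀ t, 0 < w t := fun t => mul_pos (by positivity) (hK t)
  have hw : ∀ t, 0 ≤ w t := fun t => (hw_pos t).le
  have hc : ∀ t, 0 ≤ c t := fun t => by positivity
  have hwc : Summable fun t => w t * c t :=
    hsq.of_nonneg_of_le (fun t => mul_nonneg (hw t) (hc t)) fun t => by
      simp only [w, c]; nlinarith [hK t, (Nat.cast_nonneg t : (0 : ℝ) ≤ t)]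
  have hS : ∑' t : ℕ, ((t : ℝ) + 2) * ((t : ℝ) + 1) * K₀ (t + 2) = ∑' t, w t * c t :=
    tsum_congr fun t => by ring
  rw [hS]
  exact expDeficit.tendsto_solution_mul_div hw hc hwc (hw_pos 0) (by positivity)
    (fun h hh => (hg h hh.le).1)
    fun h hh => expDeficit.eq_one_sub_exp_neg hw hc hnorm (hg h hh.le).1 (hg h hh.le).2
end

section
/- Let F̃_γ(h) = (1+γ)g(h) - D_h(1,γ) for h > 0, where D_h(1,γ) = max_{λ ∈ B_h} (λ₁ + γλ₂) with B_h = {λ : λ̄₁ ≤ λ₁ ≤ 0, 0 ≤ λ₂ ≤ g(h), ∑_{n,m}K̃_h(n,m)e^{λ₁n+λ₂m} = 1}. Then for every γ ≥ 1 and h > 0: 2g(h) ≤ F̃_γ(h) ≤ (1+γ)g(h). In particular F̃_γ(h) > 0 for h > 0. -/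
/-- For `h > 0`, `γ ≥ 1`, with `g = g(h) > 0` solving the tilting
equation, `λ̄₁ < 0` the boundary value, and
`F̃_γ(h) = (1+γ)g(h) - D_h(1,γ)` where `D_h(1,γ) = sup_{λ ∈ B_h}(λ₁ + γλ₂)`,
`B_h = {λ : λ̄₁ ≤ λ₁ ≤ 0, 0 ≤ λ₂ ≤ g, ∑ K̃_h(n,m) e^{λ₁ n + λ₂ m} = 1}`:
one has `2 g(h) ≤ F̃_γ(h) ≤ (1+γ) g(h)`; in particular `F̃_γ(h) > 0`. -/
theorem gPS_free_energy_bounds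
    (K₀ : ℕ → ℝ) (hpos : ∀ t, 2 ≤ t → 0 < K₀ t)
    (h g lam1 γ : ℝ) (hh : 0 < h) (hg : 0 < g) (hγ : 1 ≤ γ) (hlam1 : lam1 < 0)
    (hgeq : ∑' p : ℕ × ℕ,
      K₀ (p.1 + 1 + (p.2 + 1)) *
        Real.exp (h - ((p.1 : ℝ) + 1 + ((p.2 : ℝ) + 1)) * g) = 1)
    (hlam1eq : ∑' p : ℕ × ℕ,
      K₀ (p.1 + 1 + (p.2 + 1)) *
        Real.exp (h - ((p.1 : ℝ) + 1 + ((p.2 : ℝ) + 1)) * g) *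
        Real.exp (lam1 * ((p.1 : ℝ) + 1) + g * ((p.2 : ℝ) + 1)) = 1)
    (B : Set (ℝ × ℝ))
    (hB : B = {lam : ℝ × ℝ |
      lam1 ≤ lam.1 ∧ lam.1 ≤ 0 ∧ 0 ≤ lam.2 ∧ lam.2 ≤ g ∧
      ∑' p : ℕ × ℕ,
        K₀ (p.1 + 1 + (p.2 + 1)) *
          Real.exp (h - ((p.1 : ℝ) + 1 + ((p.2 : ℝ) + 1)) * g) *
          Real.exp (lam.1 * ((p.1 : ℝ) + 1) + lam.2 * ((p.2 : ℝ) + 1)) = 1})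
    (D : ℝ) (hD : D = sSup ((fun lam : ℝ × ℝ => lam.1 + γ * lam.2) '' B)) :
    2 * g ≤ (1 + γ) * g - D ∧ (1 + γ) * g - D ≤ (1 + γ) * g := by
  set S : ℕ × ℕ → ℝ := fun p => K₀ (p.1 + 1 + (p.2 + 1)) *
      Real.exp (h - ((p.1 : ℝ) + 1 + ((p.2 : ℝ) + 1)) * g) with hS
  have hSnn : ∀ p : ℕ × ℕ, 0 ≤ S p := fun p =>
    mul_nonneg (le_of_lt (hpos _ (by omega))) (Real.exp_pos _).le
  have hSsum : Summable S := by
    by_contra hc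
    rw [tsum_eq_zero_of_not_summable hc] at hgeq; norm_num at hgeq
  -- key monotonicity consequence: any point of B has l1 + l2 ≤ 0
  have key : ∀ l1 l2 : ℝ,
      (∑' p : ℕ × ℕ, S p * Real.exp (l1 * ((p.1:ℝ)+1) + l2 * ((p.2:ℝ)+1)) = 1) →
      l1 + l2 ≤ 0 := by
    intro l1 l2 heq
    by_contra hc
    push_neg at hc
    set f : ℕ × ℕ → ℝ :=
      fun p => S p * Real.exp (l1 * ((p.1:ℝ)+1) + l2 * ((p.2:ℝ)+1)) with hf
    have hfsum : Summable f := by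
      by_contra hcc
      rw [tsum_eq_zero_of_not_summable hcc] at heq; norm_num at heq
    have hswap : ∀ p : ℕ × ℕ,
        f (p.2, p.1) = S p * Real.exp (l1 * ((p.2:ℝ)+1) + l2 * ((p.1:ℝ)+1)) := by
      intro p
      simp only [hf, hS]
      rw [show p.2 + 1 + (p.1 + 1) = p.1 + 1 + (p.2 + 1) from by omega]
      ring_nf
    have hswapsum : Summable (fun p : ℕ × ℕ => f (p.2, p.1)) :=
      ((Equiv.prodComm ℕ ℕ).summable_iff (f := f)).mpr hfsum
    have hswaptsum : ∑' p : ℕ × ℕ, f (p.2, p.1) = 1 := by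
      rw [← heq]
      exact (Equiv.prodComm ℕ ℕ).tsum_eq f
    have hterm : ∀ p : ℕ × ℕ,
        2 * Real.exp (l1 + l2) * S p ≤ f p + f (p.2, p.1) := by
      intro p
      rw [hswap p]
      simp only [hf]
      rw [← mul_add]
      have hK := hSnn p
      set x : ℝ := l1 * ((p.1:ℝ)+1) + l2 * ((p.2:ℝ)+1) with hx
      set y : ℝ := l1 * ((p.2:ℝ)+1) + l2 * ((p.1:ℝ)+1) with hy
      have hxy : x + y = (l1 + l2) * (((p.1:ℝ)+1) + ((p.2:ℝ)+1)) := by ring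
      have h2 : (2:ℝ) ≤ ((p.1:ℝ)+1) + ((p.2:ℝ)+1) := by
        have := Nat.cast_nonneg (α := ℝ) p.1
        have := Nat.cast_nonneg (α := ℝ) p.2
        linarith
      have hstep : 2 * Real.exp (l1 + l2) ≤ Real.exp x + Real.exp y := by
        have hmid : Real.exp (l1 + l2) ≤ Real.exp ((x + y) / 2) := by
          apply Real.exp_le_exp.mpr
          rw [hxy]
          nlinarith [hc]
        have hamgm : 2 * Real.exp ((x + y) / 2) ≤ Real.exp x + Real.exp y := by
          have h1 : Real.exp ((x+y)/2) = Real.exp (x/2) * Real.exp (y/2) := by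
            rw [← Real.exp_add]; ring_nf
          have hx2 : Real.exp (x/2) * Real.exp (x/2) = Real.exp x := by
            rw [← Real.exp_add]; ring_nf
          have hy2 : Real.exp (y/2) * Real.exp (y/2) = Real.exp y := by
            rw [← Real.exp_add]; ring_nf
          nlinarith [sq_nonneg (Real.exp (x/2) - Real.exp (y/2)),
            Real.exp_pos (x/2), Real.exp_pos (y/2)]
        nlinarith [Real.exp_pos ((x+y)/2)]
      calc 2 * Real.exp (l1 + l2) * S p ≤ (Real.exp x + Real.exp y) * S p :=
            mul_le_mul_of_nonneg_right hstep hK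
        _ = S p * (Real.exp x + Real.exp y) := by ring
    have hsum2 : Summable (fun p : ℕ × ℕ => 2 * Real.exp (l1 + l2) * S p) :=
      hSsum.mul_left _
    have hle := Summable.tsum_le_tsum hterm hsum2 (hfsum.add hswapsum)
    rw [tsum_mul_left, hgeq, Summable.tsum_add hfsum hswapsum, heq, hswaptsum] at hle
    have : Real.exp (l1 + l2) ≤ 1 := by linarith
    have := Real.exp_lt_exp.mpr hc
    rw [Real.exp_zero] at this
    linarith
  -- every element of the image is ≤ (γ - 1) * g
  have hUB : ∀ x ∈ (fun lam : ℝ × ℝ => lam.1 + γ * lam.2) '' B, x ≤ (γ - 1) * g := by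
    rintro x ⟨lam, hlam, rfl⟩
    rw [hB] at hlam
    obtain ⟨h1, h2, h3, h4, h5⟩ := hlam
    have h12 : lam.1 + lam.2 ≤ 0 := key lam.1 lam.2 h5
    have haux : (0:ℝ) ≤ (γ - 1) * (g - lam.2) :=
      mul_nonneg (by linarith) (by linarith)
    show lam.1 + γ * lam.2 ≤ (γ - 1) * g
    nlinarith [haux, h12]
  have hne : (0:ℝ) ∈ (fun lam : ℝ × ℝ => lam.1 + γ * lam.2) '' B := by
    refine ⟨(0, 0), ?_, by simp⟩
    rw [hB]
    refine ⟨hlam1.le, le_refl _, le_refl _, hg.le, ?_⟩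
    simpa using hgeq
  have hbdd : BddAbove ((fun lam : ℝ × ℝ => lam.1 + γ * lam.2) '' B) :=
    ⟨(γ - 1) * g, fun x hx => hUB x hx⟩
  have hD0 : 0 ≤ D := hD ▸ le_csSup hbdd hne
  have hDle : D ≤ (γ - 1) * g := by
    rw [hD]
    exact csSup_le ⟨0, hne⟩ hUB
  constructor <;> nlinarith
end
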